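/- Let f be an accessible homeomorphism of a metric space M, and let A, B : M → GL(V) generate cocycles equipped with stable and unstable holonomies H^A and H^B. Suppose there exist a fixed point x₀ of f and C₀ ∈ GL(V) such that A(x₀) = C₀ ∘ B(x₀) ∘ C₀⁻¹ and H^{A,P}_{x₀} = C₀ ∘ H^{B,P}_{x₀} ∘ C₀⁻¹ for every su-cycle P based at x₀. Then there exists a map C : M → GL(V) with C(x₀) = C₀ such that A(x) = C(fx) ∘ B(x) ∘ C(x)⁻¹ for all x ∈ M and C intertwines H^A and H^B. -/
import Mathlib


open Filter Topology

/-- The cocycle generated by `A : M → GL(V)` over `f`: `A⁰_x = Id` and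
`Aⁿ_x = A(f^{n−1}x) ∘ ⋯ ∘ A(fx) ∘ A(x)`. -/
noncomputable def coc {M : Type*} {V : Type*} [NormedAddCommGroup V] [NormedSpace ℝ V]
    (f : M → M) (A : M → (V →L[ℝ] V)ˣ) : ℕ → M → (V →L[ℝ] V)ˣ
  | 0, _ => 1
  | n + 1, x => coc f A n (f x) * A x

/-- The stable set `Wˢ(x) = {y : dist(fⁿx, fⁿy) → 0}`. -/
def stableSet {M : Type*} [MetricSpace M] (f : M → M) (x : M) : Set M :=
  {y | Tendsto (fun n : ℕ => dist (f^[n] x) (f^[n] y)) atTop (𝓝 0)}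

/-- The unstable set `Wᵘ(x) = {y : dist(f⁻ⁿx, f⁻ⁿy) → 0}`. -/
def unstableSet {M : Type*} [MetricSpace M] (f : M ≃ₜ M) (x : M) : Set M :=
  {y | Tendsto (fun n : ℕ => dist ((⇑f.symm)^[n] x) ((⇑f.symm)^[n] y)) atTop (𝓝 0)}

/-- A stable holonomy for the cocycle generated by `A`: a family `H x y ∈ GL(V)`
(relevant for `y ∈ Wˢ(x)`) with `H x x = Id`, `H y z ∘ H x y = H x z`, and
`H x y = (Aⁿ_y)⁻¹ ∘ H (fⁿx) (fⁿy) ∘ Aⁿ_x` for all `n`. -/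
def IsStableHolonomy {M : Type*} [MetricSpace M] {V : Type*} [NormedAddCommGroup V]
    [NormedSpace ℝ V] (f : M → M) (A : M → (V →L[ℝ] V)ˣ)
    (H : M → M → (V →L[ℝ] V)ˣ) : Prop :=
  (∀ x, H x x = 1) ∧
  (∀ x y z, y ∈ stableSet f x → z ∈ stableSet f y → H y z * H x y = H x z) ∧
  (∀ x y, y ∈ stableSet f x → ∀ n : ℕ,
    H x y = (coc f A n y)⁻¹ * H (f^[n] x) (f^[n] y) * coc f A n x)

/-- An unstable holonomy for the cocycle generated by `A`: a family `H x y ∈ GL(V)`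
(relevant for `y ∈ Wᵘ(x)`) with `H x x = Id`, `H y z ∘ H x y = H x z`, and
`H x y = (A⁻ⁿ_y)⁻¹ ∘ H (f⁻ⁿx) (f⁻ⁿy) ∘ A⁻ⁿ_x` for all `n`, where
`A⁻ⁿ_x = (Aⁿ_{f⁻ⁿx})⁻¹`. -/
def IsUnstableHolonomy {M : Type*} [MetricSpace M] {V : Type*} [NormedAddCommGroup V]
    [NormedSpace ℝ V] (f : M ≃ₜ M) (A : M → (V →L[ℝ] V)ˣ)
    (H : M → M → (V →L[ℝ] V)ˣ) : Prop :=
  (∀ x, H x x = 1) ∧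
  (∀ x y z, y ∈ unstableSet f x → z ∈ unstableSet f y → H y z * H x y = H x z) ∧
  (∀ x y, y ∈ unstableSet f x → ∀ n : ℕ,
    H x y = coc (⇑f) A n ((⇑f.symm)^[n] y) * H ((⇑f.symm)^[n] x) ((⇑f.symm)^[n] y) *
      (coc (⇑f) A n ((⇑f.symm)^[n] x))⁻¹)

/-- An `su`-path starting at `x` is encoded by a list of labelled steps: step
`(true, y)` goes to `y ∈ Wˢ` of the current point, step `(false, y)` goes to
`y ∈ Wᵘ` of the current point. `suChain f x p` says the list `p` is a valid
`su`-path starting at `x`. -/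
def suChain {M : Type*} [MetricSpace M] (f : M ≃ₜ M) : M → List (Bool × M) → Prop
  | _, [] => True
  | x, (b, y) :: p => (if b then y ∈ stableSet (⇑f) x else y ∈ unstableSet f x) ∧ suChain f y p

/-- The endpoint of an `su`-path starting at `x` encoded by the list `p`. -/
def chainEnd {M : Type*} : M → List (Bool × M) → M
  | x, [] => x
  | _, (_, y) :: p => chainEnd y p

/-- The weight `H^P = H_{x_{k−1},x_k} ∘ ⋯ ∘ H_{x₀,x₁}` of an `su`-path with respect to a
pair `(Hs, Hu)` of a stable and an unstable holonomy. -/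
noncomputable def chainWeight {M : Type*} {V : Type*} [NormedAddCommGroup V]
    [NormedSpace ℝ V] (Hs Hu : M → M → (V →L[ℝ] V)ˣ) :
    M → List (Bool × M) → (V →L[ℝ] V)ˣ
  | _, [] => 1
  | x, (b, y) :: p => chainWeight Hs Hu y p * (if b then Hs x y else Hu x y)


section Aux

variable {M : Type*} [MetricSpace M] {V : Type*} [NormedAddCommGroup V] [NormedSpace ℝ V]

theorem stableSet_symm {f : M → M} {x y : M} (h : y ∈ stableSet f x) : x ∈ stableSet f y := by
  simpa [stableSet, dist_comm] using h

theorem unstableSet_symm {f : M ≃ₜ M} {x y : M} (h : y ∈ unstableSet f x) :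
    x ∈ unstableSet f y := by
  simpa [unstableSet, dist_comm] using h

theorem stableSet_map (f : M ≃ₜ M) {x y : M} (h : y ∈ stableSet (⇑f) x) :
    f y ∈ stableSet (⇑f) (f x) := by
  have := (tendsto_add_atTop_iff_nat
    (f := fun n => dist ((⇑f)^[n] x) ((⇑f)^[n] y)) 1).2 h
  simpa [stableSet, Function.iterate_succ_apply] using this

theorem unstableSet_map (f : M ≃ₜ M) {x y : M} (h : y ∈ unstableSet f x) :
    f y ∈ unstableSet f (f x) := by
  rw [unstableSet, Set.mem_setOf_eq, ← tendsto_add_atTop_iff_nat 1]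
  simpa [unstableSet, Function.iterate_succ_apply] using h

theorem coc_one (f : M → M) (A : M → (V →L[ℝ] V)ˣ) (x : M) : coc f A 1 x = A x := by
  show coc f A (0 + 1) x = A x
  simp [coc]

theorem hol_s_inv {f : M → M} {A : M → (V →L[ℝ] V)ˣ} {Hs : M → M → (V →L[ℝ] V)ˣ}
    (hH : IsStableHolonomy f A Hs) {x y : M} (h : y ∈ stableSet f x) :
    Hs y x = (Hs x y)⁻¹ := by
  have h2 := hH.2.1 x y x h (stableSet_symm h)
  rw [hH.1 x] at h2
  exact eq_inv_of_mul_eq_one_left h2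

theorem hol_u_inv {f : M ≃ₜ M} {A : M → (V →L[ℝ] V)ˣ} {Hu : M → M → (V →L[ℝ] V)ˣ}
    (hH : IsUnstableHolonomy f A Hu) {x y : M} (h : y ∈ unstableSet f x) :
    Hu y x = (Hu x y)⁻¹ := by
  have h2 := hH.2.1 x y x h (unstableSet_symm h)
  rw [hH.1 x] at h2
  exact eq_inv_of_mul_eq_one_left h2

theorem hol_s_map {f : M ≃ₜ M} {A : M → (V →L[ℝ] V)ˣ} {Hs : M → M → (V →L[ℝ] V)ˣ}
    (hH : IsStableHolonomy (⇑f) A Hs) {x y : M} (h : y ∈ stableSet (⇑f) x) :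
    Hs (f x) (f y) = A y * Hs x y * (A x)⁻¹ := by
  have h1 := hH.2.2 x y h 1
  simp only [coc_one, Function.iterate_one] at h1
  rw [h1]; group

theorem hol_u_map {f : M ≃ₜ M} {A : M → (V →L[ℝ] V)ˣ} {Hu : M → M → (V →L[ℝ] V)ˣ}
    (hH : IsUnstableHolonomy f A Hu) {x y : M} (h : y ∈ unstableSet f x) :
    Hu (f x) (f y) = A y * Hu x y * (A x)⁻¹ := by
  have h1 := hH.2.2 (f x) (f y) (unstableSet_map f h) 1
  simpa [coc_one, Function.iterate_one] using h1

end Aux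

section Chains

variable {M : Type*} [MetricSpace M] {V : Type*} [NormedAddCommGroup V] [NormedSpace ℝ V]
variable {f : M ≃ₜ M}

theorem chainEnd_append (x : M) (p q : List (Bool × M)) :
    chainEnd x (p ++ q) = chainEnd (chainEnd x p) q := by
  induction p generalizing x with
  | nil => rfl
  | cons hd t ih => obtain ⟨b, y⟩ := hd; simpa [chainEnd] using ih y

theorem suChain_append {x : M} {p q : List (Bool × M)} :
    suChain f x (p ++ q) ↔ suChain f x p ∧ suChain f (chainEnd x p) q := by
  induction p generalizing x with
  | nil => simp [suChain, chainEnd]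
  | cons hd t ih => obtain ⟨b, y⟩ := hd; simp [suChain, chainEnd, ih, and_assoc]

theorem chainWeight_append (Hs Hu : M → M → (V →L[ℝ] V)ˣ) (x : M) (p q : List (Bool × M)) :
    chainWeight Hs Hu x (p ++ q) =
      chainWeight Hs Hu (chainEnd x p) q * chainWeight Hs Hu x p := by
  induction p generalizing x with
  | nil => simp [chainWeight, chainEnd]
  | cons hd t ih => obtain ⟨b, y⟩ := hd; simp [chainWeight, chainEnd, ih, mul_assoc]

/-- The reversal of an `su`-path starting at `x`. -/
def revChain : M → List (Bool × M) → List (Bool × M)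
  | _, [] => []
  | x, (b, y) :: p => revChain y p ++ [(b, x)]

theorem chainEnd_revChain (x : M) (p : List (Bool × M)) :
    chainEnd (chainEnd x p) (revChain x p) = x := by
  induction p generalizing x with
  | nil => rfl
  | cons hd t ih =>
    obtain ⟨b, y⟩ := hd
    simp [revChain, chainEnd, chainEnd_append, ih y]

theorem suChain_revChain {x : M} {p : List (Bool × M)} (h : suChain f x p) :
    suChain f (chainEnd x p) (revChain x p) := by
  induction p generalizing x with
  | nil => trivial
  | cons hd t ih =>
    obtain ⟨b, y⟩ := hd
    obtain ⟨h1, h2⟩ := h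
    show suChain f (chainEnd y t) (revChain y t ++ [(b, x)])
    rw [suChain_append]
    refine ⟨ih h2, ?_⟩
    rw [chainEnd_revChain]
    refine ⟨?_, trivial⟩
    cases b
    · simpa using unstableSet_symm (by simpa using h1)
    · simpa using stableSet_symm (f := ⇑f) (by simpa using h1)

theorem chainWeight_revChain {Hs Hu : M → M → (V →L[ℝ] V)ˣ}
    (hinv : ∀ (b : Bool) (x y : M),
      (if b then y ∈ stableSet (⇑f) x else y ∈ unstableSet f x) →
      (if b then Hs y x else Hu y x) = (if b then Hs x y else Hu x y)⁻¹)
    {x : M} {p : List (Bool × M)} (h : suChain f x p) :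
    chainWeight Hs Hu (chainEnd x p) (revChain x p) = (chainWeight Hs Hu x p)⁻¹ := by
  induction p generalizing x with
  | nil => simp [chainWeight, chainEnd, revChain]
  | cons hd t ih =>
    obtain ⟨b, y⟩ := hd
    obtain ⟨h1, h2⟩ := h
    show chainWeight Hs Hu (chainEnd y t) (revChain y t ++ [(b, x)]) = _
    rw [chainWeight_append, chainEnd_revChain, ih h2]
    simp only [chainWeight]
    rw [hinv b x y h1]
    cases b <;> simp [mul_inv_rev]

/-- Image of an `su`-path under `f`. -/
def mapChain (f : M ≃ₜ M) (p : List (Bool × M)) : List (Bool × M) :=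
  p.map fun q => (q.1, f q.2)

theorem chainEnd_mapChain (x : M) (p : List (Bool × M)) :
    chainEnd (f x) (mapChain f p) = f (chainEnd x p) := by
  induction p generalizing x with
  | nil => rfl
  | cons hd t ih => obtain ⟨b, y⟩ := hd; simpa [mapChain, chainEnd] using ih y

theorem suChain_mapChain {x : M} {p : List (Bool × M)} (h : suChain f x p) :
    suChain f (f x) (mapChain f p) := by
  induction p generalizing x with
  | nil => trivial
  | cons hd t ih =>
    obtain ⟨b, y⟩ := hd
    obtain ⟨h1, h2⟩ := h
    refine ⟨?_, ih h2⟩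
    cases b
    · simpa using unstableSet_map f (by simpa using h1)
    · simpa using stableSet_map f (by simpa using h1)

theorem chainWeight_mapChain {A : M → (V →L[ℝ] V)ˣ} {Hs Hu : M → M → (V →L[ℝ] V)ˣ}
    (hmap : ∀ (b : Bool) (x y : M),
      (if b then y ∈ stableSet (⇑f) x else y ∈ unstableSet f x) →
      (if b then Hs (f x) (f y) else Hu (f x) (f y)) =
        A y * (if b then Hs x y else Hu x y) * (A x)⁻¹)
    {x : M} {p : List (Bool × M)} (h : suChain f x p) :
    chainWeight Hs Hu (f x) (mapChain f p) =
      A (chainEnd x p) * chainWeight Hs Hu x p * (A x)⁻¹ := by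
  induction p generalizing x with
  | nil => simp [chainWeight, chainEnd, mapChain]
  | cons hd t ih =>
    obtain ⟨b, y⟩ := hd
    obtain ⟨h1, h2⟩ := h
    show chainWeight Hs Hu (f x) ((b, f y) :: mapChain f t) = _
    simp only [chainWeight, chainEnd]
    rw [ih h2, hmap b x y h1]
    group

end Chains

private theorem grp_conj {G : Type*} [Group G] (a a0 b b0 c wA wB : G)
    (hc : a0 = c * b0 * c⁻¹) :
    a = (a * wA * a0⁻¹) * c * (b * wB * b0⁻¹)⁻¹ * b * (wA * c * wB⁻¹)⁻¹ := by
  subst hc; group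

private theorem grp_hol {G : Type*} [Group G] (hA hB c wA wB : G) :
    hA = (hA * wA) * c * (hB * wB)⁻¹ * hB * (wA * c * wB⁻¹)⁻¹ := by
  group

theorem stmt_12' {V : Type*} [NormedAddCommGroup V] [NormedSpace ℝ V] [CompleteSpace V]
    {M : Type*} [MetricSpace M] (f : M ≃ₜ M) (A B : M → (V →L[ℝ] V)ˣ)
    (HAs HAu HBs HBu : M → M → (V →L[ℝ] V)ˣ)
    (hHAs : IsStableHolonomy (⇑f) A HAs) (hHAu : IsUnstableHolonomy f A HAu)
    (hHBs : IsStableHolonomy (⇑f) B HBs) (hHBu : IsUnstableHolonomy f B HBu)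
    (hacc : ∀ x y : M, ∃ p : List (Bool × M), suChain f x p ∧ chainEnd x p = y)
    (x₀ : M) (hx₀ : f x₀ = x₀) (C₀ : (V →L[ℝ] V)ˣ)
    (hconj : A x₀ = C₀ * B x₀ * C₀⁻¹)
    (hcyc : ∀ p : List (Bool × M), suChain f x₀ p → chainEnd x₀ p = x₀ →
      chainWeight HAs HAu x₀ p = C₀ * chainWeight HBs HBu x₀ p * C₀⁻¹) :
    ∃ C : M → (V →L[ℝ] V)ˣ, C x₀ = C₀ ∧
      (∀ x : M, A x = C (f x) * B x * (C x)⁻¹) ∧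
      (∀ x y : M, y ∈ stableSet (⇑f) x → HAs x y = C y * HBs x y * (C x)⁻¹) ∧
      (∀ x y : M, y ∈ unstableSet f x → HAu x y = C y * HBu x y * (C x)⁻¹) := by
  classical
  -- combined inverse lemmas
  have hinvA : ∀ (b : Bool) (x y : M),
      (if b then y ∈ stableSet (⇑f) x else y ∈ unstableSet f x) →
      (if b then HAs y x else HAu y x) = (if b then HAs x y else HAu x y)⁻¹ := by
    intro b x y h
    cases b
    · simpa using hol_u_inv hHAu (by simpa using h)
    · simpa using hol_s_inv hHAs (by simpa using h)
  have hinvB : ∀ (b : Bool) (x y : M),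
      (if b then y ∈ stableSet (⇑f) x else y ∈ unstableSet f x) →
      (if b then HBs y x else HBu y x) = (if b then HBs x y else HBu x y)⁻¹ := by
    intro b x y h
    cases b
    · simpa using hol_u_inv hHBu (by simpa using h)
    · simpa using hol_s_inv hHBs (by simpa using h)
  have hmapA : ∀ (b : Bool) (x y : M),
      (if b then y ∈ stableSet (⇑f) x else y ∈ unstableSet f x) →
      (if b then HAs (f x) (f y) else HAu (f x) (f y)) =
        A y * (if b then HAs x y else HAu x y) * (A x)⁻¹ := by
    intro b x y h
    cases b
    · simpa using hol_u_map hHAu (by simpa using h)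
    · simpa using hol_s_map hHAs (by simpa using h)
  have hmapB : ∀ (b : Bool) (x y : M),
      (if b then y ∈ stableSet (⇑f) x else y ∈ unstableSet f x) →
      (if b then HBs (f x) (f y) else HBu (f x) (f y)) =
        B y * (if b then HBs x y else HBu x y) * (B x)⁻¹ := by
    intro b x y h
    cases b
    · simpa using hol_u_map hHBu (by simpa using h)
    · simpa using hol_s_map hHBs (by simpa using h)
  -- well-definedness
  have wd : ∀ p q : List (Bool × M), suChain f x₀ p → suChain f x₀ q →
      chainEnd x₀ p = chainEnd x₀ q →
      chainWeight HAs HAu x₀ p * C₀ * (chainWeight HBs HBu x₀ p)⁻¹ =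
        chainWeight HAs HAu x₀ q * C₀ * (chainWeight HBs HBu x₀ q)⁻¹ := by
    intro p q hp hq hend
    have hsu : suChain f x₀ (p ++ revChain x₀ q) := by
      rw [suChain_append]
      exact ⟨hp, by rw [hend]; exact suChain_revChain hq⟩
    have hE : chainEnd x₀ (p ++ revChain x₀ q) = x₀ := by
      rw [chainEnd_append, hend, chainEnd_revChain]
    have h1 := hcyc _ hsu hE
    rw [chainWeight_append, chainWeight_append, hend, chainWeight_revChain hinvA hq,
      chainWeight_revChain hinvB hq] at h1
    have h2 : chainWeight HAs HAu x₀ p =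
        chainWeight HAs HAu x₀ q *
          (C₀ * ((chainWeight HBs HBu x₀ q)⁻¹ * chainWeight HBs HBu x₀ p) * C₀⁻¹) := by
      rw [← h1]; group
    rw [h2]; group
  choose path hpath hpend using fun y => hacc x₀ y
  set D : M → (V →L[ℝ] V)ˣ := fun y =>
    chainWeight HAs HAu x₀ (path y) * C₀ * (chainWeight HBs HBu x₀ (path y))⁻¹ with hD
  have keyC : ∀ (y : M) (p : List (Bool × M)), suChain f x₀ p → chainEnd x₀ p = y →
      D y = chainWeight HAs HAu x₀ p * C₀ * (chainWeight HBs HBu x₀ p)⁻¹ := by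
    intro y p hp hend
    exact wd (path y) p (hpath y) hp ((hpend y).trans hend.symm)
  refine ⟨D, ?_, ?_, ?_, ?_⟩
  · have := keyC x₀ [] trivial rfl
    simpa [chainWeight] using this
  · intro x
    have hE := hpend x
    have hsu : suChain f x₀ (mapChain f (path x)) := by
      have := suChain_mapChain (hpath x)
      rwa [hx₀] at this
    have hend : chainEnd x₀ (mapChain f (path x)) = f x := by
      have := chainEnd_mapChain (f := f) x₀ (path x)
      rw [hx₀, hE] at this
      exact this
    have hWA : chainWeight HAs HAu x₀ (mapChain f (path x)) =
        A x * chainWeight HAs HAu x₀ (path x) * (A x₀)⁻¹ := by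
      have := chainWeight_mapChain hmapA (hpath x)
      rwa [hx₀, hE] at this
    have hWB : chainWeight HBs HBu x₀ (mapChain f (path x)) =
        B x * chainWeight HBs HBu x₀ (path x) * (B x₀)⁻¹ := by
      have := chainWeight_mapChain hmapB (hpath x)
      rwa [hx₀, hE] at this
    have hDfx : D (f x) = (A x * chainWeight HAs HAu x₀ (path x) * (A x₀)⁻¹) * C₀ *
        (B x * chainWeight HBs HBu x₀ (path x) * (B x₀)⁻¹)⁻¹ := by
      rw [keyC (f x) (mapChain f (path x)) hsu hend, hWA, hWB]
    have hDx : D x = chainWeight HAs HAu x₀ (path x) * C₀ *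
        (chainWeight HBs HBu x₀ (path x))⁻¹ := rfl
    rw [hDfx, hDx]
    exact grp_conj _ _ _ _ _ _ _ hconj
  · intro x y hy
    have hE := hpend x
    have hsu : suChain f x₀ (path x ++ [(true, y)]) := by
      rw [suChain_append, hE]
      exact ⟨hpath x, by simpa using hy, trivial⟩
    have hend : chainEnd x₀ (path x ++ [(true, y)]) = y := by
      rw [chainEnd_append, hE]; rfl
    have hDy : D y = (HAs x y * chainWeight HAs HAu x₀ (path x)) * C₀ *
        (HBs x y * chainWeight HBs HBu x₀ (path x))⁻¹ := by
      rw [keyC y _ hsu hend, chainWeight_append, chainWeight_append, hE]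
      simp [chainWeight]
    have hDx : D x = chainWeight HAs HAu x₀ (path x) * C₀ *
        (chainWeight HBs HBu x₀ (path x))⁻¹ := rfl
    rw [hDy, hDx]
    exact grp_hol _ _ _ _ _
  · intro x y hy
    have hE := hpend x
    have hsu : suChain f x₀ (path x ++ [(false, y)]) := by
      rw [suChain_append, hE]
      exact ⟨hpath x, by simpa using hy, trivial⟩
    have hend : chainEnd x₀ (path x ++ [(false, y)]) = y := by
      rw [chainEnd_append, hE]; rfl
    have hDy : D y = (HAu x y * chainWeight HAs HAu x₀ (path x)) * C₀ *
        (HBu x y * chainWeight HBs HBu x₀ (path x))⁻¹ := by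
      rw [keyC y _ hsu hend, chainWeight_append, chainWeight_append, hE]
      simp [chainWeight]
    have hDx : D x = chainWeight HAs HAu x₀ (path x) * C₀ *
        (chainWeight HBs HBu x₀ (path x))⁻¹ := rfl
    rw [hDy, hDx]
    exact grp_hol _ _ _ _ _
/-- Corollary 4.9: if `x₀` is a fixed point of the accessible homeomorphism `f`,
`A(x₀) = C₀ ∘ B(x₀) ∘ C₀⁻¹`, and the `su`-cycle weights at `x₀` of `H^A` and `H^B`
are conjugate by `C₀`, then there is a conjugacy `C` between `A` and `B` with
`C(x₀) = C₀` that intertwines `H^A` and `H^B`. -/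
theorem stmt_12 {V : Type*} [NormedAddCommGroup V] [NormedSpace ℝ V] [CompleteSpace V]
    {M : Type*} [MetricSpace M] (f : M ≃ₜ M) (A B : M → (V →L[ℝ] V)ˣ)
    (HAs HAu HBs HBu : M → M → (V →L[ℝ] V)ˣ)
    (hHAs : IsStableHolonomy (⇑f) A HAs) (hHAu : IsUnstableHolonomy f A HAu)
    (hHBs : IsStableHolonomy (⇑f) B HBs) (hHBu : IsUnstableHolonomy f B HBu)
    (hacc : ∀ x y : M, ∃ p : List (Bool × M), suChain f x p ∧ chainEnd x p = y)
    (x₀ : M) (hx₀ : f x₀ = x₀) (C₀ : (V →L[ℝ] V)ˣ)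
    (hconj : A x₀ = C₀ * B x₀ * C₀⁻¹)
    (hcyc : ∀ p : List (Bool × M), suChain f x₀ p → chainEnd x₀ p = x₀ →
      chainWeight HAs HAu x₀ p = C₀ * chainWeight HBs HBu x₀ p * C₀⁻¹) :
    ∃ C : M → (V →L[ℝ] V)ˣ, C x₀ = C₀ ∧
      (∀ x : M, A x = C (f x) * B x * (C x)⁻¹) ∧
      (∀ x y : M, y ∈ stableSet (⇑f) x → HAs x y = C y * HBs x y * (C x)⁻¹) ∧
      (∀ x y : M, y ∈ unstableSet f x → HAu x y = C y * HBu x y * (C x)⁻¹) := by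
  exact stmt_12' f A B HAs HAu HBs HBu hHAs hHAu hHBs hHBu hacc x₀ hx₀ C₀ hconj hcyc
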